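/- (Control of the non-conformity) For all φ ∈ H¹(𝒯_h) and all ξ ∈ H¹_{Γ_D}(Ω) with A∇ξ ∈ X_{Γ_N}(div,Ω), one has |a_h(φ,ξ) + (φ, div(A∇ξ))_{𝒯_h} − (φ, A∇ξ·n)_{ℱ_h^R}| ≤ ‖φ−φ̃‖_{†,1,𝒯_h} · ‖A∇ξ − σ_h‖_{†,div,𝒯_h} for all φ̃ ∈ H¹_{Γ_D}(Ω) and all σ_h ∈ [𝒫_p(𝒯_h)]^d ∩ X_{Γ_N}(div,Ω). -/

import Mathlib

noncomputable section

/-- Abstract setting for interior penalty discontinuous Galerkin (IPDG) discretizations of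
Helmholtz problems.  `Elem` indexes the mesh elements `K ∈ 𝒯_h`, `FaceR` the Robin boundary
faces `F ∈ ℱ_h^R`.  `V` plays the role of the broken Sobolev space `H¹(𝒯_h)` and `W` of
`X_{Γ_N}(div,Ω)`; `H10` is the conforming subspace `H¹_{Γ_D}(Ω) ⊆ H¹(𝒯_h)`, `Pp` the broken
polynomial space `𝒫_p(𝒯_h)` and `Wh` the BDM space `[𝒫_p(𝒯_h)]^d ∩ X_{Γ_N}(div,Ω)`.
The local quantities are: `normL2 K v = ‖v‖_K`, `normAG K v = ‖𝔊(v)‖_{A,K}` (the A-weighted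
norm of the discrete/lifted gradient), `normF F v = ‖v‖_F`, `normAinv K w = ‖w‖_{A⁻¹,K}`,
`normDiv K w = ‖div w‖_K`, `normWn F w = ‖w·n‖_F`, and the local L² pairings
`pairG K φ w = (𝔊(φ), w)_K`, `pairDiv K φ w = (φ, div w)_K`, `pairWn F φ w = (φ, w·n)_F`,
`pairMu K φ v = (μ φ, v)_K`, `pairGam F φ v = (γ φ, v)_F`, `pairAG K φ v = (A 𝔊(φ), 𝔊(v))_K`.
`sh` is the stabilization form `s_h`, `b` the continuous Helmholtz sesquilinear form and
`rhs v = (f, v)_Ω` the load functional.  The structure fields also record the standing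
assumptions of the paper: positivity of the mesh/coefficient data, (semi)norm axioms,
local Cauchy–Schwarz inequalities, sesquilinearity, vanishing of `s_h` on conforming
arguments, the conforming and discrete integration-by-parts identities for the discrete
gradient, and consistency of the continuous form. -/
structure DG where
  Elem : Type
  FaceR : Type
  [finElem : Fintype Elem]
  [finFaceR : Fintype FaceR]
  V : Type
  W : Type
  [acgV : AddCommGroup V]
  [modV : Module ℂ V]
  [acgW : AddCommGroup W]
  [modW : Module ℂ W]
  H10 : Submodule ℂ V
  Pp : Submodule ℂ V
  Wh : Submodule ℂ W
  ω : ℝ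
  ω_pos : 0 < ω
  hK : Elem → ℝ
  αK : Elem → ℝ
  μK : Elem → ℝ
  hF : FaceR → ℝ
  αF : FaceR → ℝ
  γF : FaceR → ℝ
  hK_pos : ∀ K, 0 < hK K
  αK_pos : ∀ K, 0 < αK K
  μK_pos : ∀ K, 0 < μK K
  hF_pos : ∀ F, 0 < hF F
  αF_pos : ∀ F, 0 < αF F
  γF_pos : ∀ F, 0 < γF F
  normL2 : Elem → V → ℝ
  normAG : Elem → V → ℝ
  normF : FaceR → V → ℝ
  normAinv : Elem → W → ℝ
  normDiv : Elem → W → ℝ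
  normWn : FaceR → W → ℝ
  normL2_nonneg : ∀ K v, 0 ≤ normL2 K v
  normAG_nonneg : ∀ K v, 0 ≤ normAG K v
  normF_nonneg : ∀ F v, 0 ≤ normF F v
  normAinv_nonneg : ∀ K w, 0 ≤ normAinv K w
  normDiv_nonneg : ∀ K w, 0 ≤ normDiv K w
  normWn_nonneg : ∀ F w, 0 ≤ normWn F w
  normL2_add : ∀ K u v, normL2 K (u + v) ≤ normL2 K u + normL2 K v
  normL2_smul : ∀ K (c : ℂ) v, normL2 K (c • v) = ‖c‖ * normL2 K v
  normF_add : ∀ F u v, normF F (u + v) ≤ normF F u + normF F v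
  normF_smul : ∀ F (c : ℂ) v, normF F (c • v) = ‖c‖ * normF F v
  pairG : Elem → V → W → ℂ
  pairDiv : Elem → V → W → ℂ
  pairWn : FaceR → V → W → ℂ
  pairMu : Elem → V → V → ℂ
  pairGam : FaceR → V → V → ℂ
  pairAG : Elem → V → V → ℂ
  sh : V → V → ℂ
  b : V → V → ℂ
  rhs : V → ℂ
  pairG_sub_left : ∀ K u v w, pairG K (u - v) w = pairG K u w - pairG K v w
  pairG_sub_right : ∀ K u w w', pairG K u (w - w') = pairG K u w - pairG K u w'
  pairDiv_sub_left : ∀ K u v w, pairDiv K (u - v) w = pairDiv K u w - pairDiv K v w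
  pairDiv_sub_right : ∀ K u w w', pairDiv K u (w - w') = pairDiv K u w - pairDiv K u w'
  pairWn_sub_left : ∀ F u v w, pairWn F (u - v) w = pairWn F u w - pairWn F v w
  pairWn_sub_right : ∀ F u w w', pairWn F u (w - w') = pairWn F u w - pairWn F u w'
  pairMu_sub_left : ∀ K u v r, pairMu K (u - v) r = pairMu K u r - pairMu K v r
  pairMu_sub_right : ∀ K u v r, pairMu K u (v - r) = pairMu K u v - pairMu K u r
  pairGam_sub_left : ∀ F u v r, pairGam F (u - v) r = pairGam F u r - pairGam F v r
  pairGam_sub_right : ∀ F u v r, pairGam F u (v - r) = pairGam F u v - pairGam F u r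
  pairAG_sub_left : ∀ K u v r, pairAG K (u - v) r = pairAG K u r - pairAG K v r
  pairAG_sub_right : ∀ K u v r, pairAG K u (v - r) = pairAG K u v - pairAG K u r
  sh_sub_left : ∀ u v r, sh (u - v) r = sh u r - sh v r
  sh_sub_right : ∀ u v r, sh u (v - r) = sh u v - sh u r
  pairMu_symm : ∀ K u v, pairMu K u v = starRingEnd ℂ (pairMu K v u)
  pairGam_symm : ∀ F u v, pairGam F u v = starRingEnd ℂ (pairGam F v u)
  pairAG_symm : ∀ K u v, pairAG K u v = starRingEnd ℂ (pairAG K v u)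
  csG : ∀ K φ w, ‖pairG K φ w‖ ≤ normAG K φ * normAinv K w
  csDiv : ∀ K φ w, ‖pairDiv K φ w‖ ≤ normL2 K φ * normDiv K w
  csWn : ∀ F φ w, ‖pairWn F φ w‖ ≤ normF F φ * normWn F w
  csMu : ∀ K φ v, ‖pairMu K φ v‖ ≤ μK K * (normL2 K φ * normL2 K v)
  csGam : ∀ F φ v, ‖pairGam F φ v‖ ≤ γF F * (normF F φ * normF F v)
  csAG : ∀ K φ v, ‖pairAG K φ v‖ ≤ normAG K φ * normAG K v
  pairMu_self : ∀ K v, pairMu K v v = ((μK K * normL2 K v ^ 2 : ℝ) : ℂ)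
  pairGam_self : ∀ F v, pairGam F v v = ((γF F * normF F v ^ 2 : ℝ) : ℂ)
  pairAG_self : ∀ K v, pairAG K v v = ((normAG K v ^ 2 : ℝ) : ℂ)
  sh_conf : ∀ u v, u ∈ H10 ∨ v ∈ H10 → sh u v = 0
  ibp_conf : ∀ u ∈ H10, ∀ w : W,
    (∑ K : Elem, (pairG K u w + pairDiv K u w)) = ∑ F : FaceR, pairWn F u w
  ibp_disc : ∀ u : V, ∀ w ∈ Wh,
    (∑ K : Elem, (pairG K u w + pairDiv K u w)) = ∑ F : FaceR, pairWn F u w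
  consistency : ∀ u ∈ H10, ∀ v ∈ H10,
    b u v = -((ω ^ 2 : ℝ) : ℂ) * (∑ K : Elem, pairMu K u v)
      - Complex.I * (ω : ℂ) * (∑ F : FaceR, pairGam F u v)
      + ∑ K : Elem, pairAG K u v

attribute [instance] DG.finElem DG.finFaceR DG.acgV DG.modV DG.acgW DG.modW

namespace DG

variable (C : DG)

/-- `ϑ_K := √(α_K/μ_K)`. -/
def thetaK (K : C.Elem) : ℝ := Real.sqrt (C.αK K / C.μK K)

/-- `ϑ_F := α_F/γ_F`. -/
def thetaF (F : C.FaceR) : ℝ := C.αF F / C.γF F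

/-- The square of the mesh-dependent norm `‖v‖_{†,1,𝒯_h}`. -/
def dag1Sq (v : C.V) : ℝ :=
  (∑ K : C.Elem, (max 1 (C.ω ^ 2 * C.hK K ^ 2 / C.thetaK K ^ 2) * (C.αK K / C.hK K ^ 2) *
      C.normL2 K v ^ 2 + C.normAG K v ^ 2))
  + ∑ F : C.FaceR, max 1 (C.ω * C.hF F / C.thetaF F) * (C.αF F / C.hF F) * C.normF F v ^ 2

/-- The mesh-dependent norm `‖v‖_{†,1,𝒯_h}`. -/
def dag1 (v : C.V) : ℝ := Real.sqrt (C.dag1Sq v)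

/-- The square of the mesh-dependent norm `‖w‖_{†,div,𝒯_h}`. -/
def dagDivSq (w : C.W) : ℝ :=
  (∑ K : C.Elem, (C.normAinv K w ^ 2 + C.hK K ^ 2 / C.αK K * C.normDiv K w ^ 2))
  + ∑ F : C.FaceR, C.hF F / C.αF F * C.normWn F w ^ 2

/-- The mesh-dependent norm `‖w‖_{†,div,𝒯_h}`. -/
def dagDiv (w : C.W) : ℝ := Real.sqrt (C.dagDivSq w)

/-- The square of the broken energy norm `|||v|||_{ω,𝒯_h}`. -/
def enormSq (v : C.V) : ℝ :=
  (∑ K : C.Elem, (C.ω ^ 2 * C.μK K * C.normL2 K v ^ 2 + C.normAG K v ^ 2))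
  + ∑ F : C.FaceR, C.ω * C.γF F * C.normF F v ^ 2

/-- The broken energy norm `|||v|||_{ω,𝒯_h}`. -/
def enorm (v : C.V) : ℝ := Real.sqrt (C.enormSq v)

/-- `‖v‖_{μ,𝒯_h}`. -/
def normMuT (v : C.V) : ℝ := Real.sqrt (∑ K : C.Elem, C.μK K * C.normL2 K v ^ 2)

/-- `‖v‖_{γ,ℱ_h^R}`. -/
def normGamR (v : C.V) : ℝ := Real.sqrt (∑ F : C.FaceR, C.γF F * C.normF F v ^ 2)

/-- `‖𝔊(v)‖_{A,𝒯_h}`; for conforming `v` this is `‖∇v‖_{A,Ω}`. -/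
def normAgrad (v : C.V) : ℝ := Real.sqrt (∑ K : C.Elem, C.normAG K v ^ 2)

/-- `‖div w‖_Ω`. -/
def normDivT (w : C.W) : ℝ := Real.sqrt (∑ K : C.Elem, C.normDiv K w ^ 2)

/-- The broken integration-by-parts pairing
`(𝔊(φ), w)_{𝒯_h} + (φ, div w)_{𝒯_h} − (φ, w·n)_{ℱ_h^R}`. -/
def pairB (φ : C.V) (w : C.W) : ℂ :=
  (∑ K : C.Elem, (C.pairG K φ w + C.pairDiv K φ w)) - ∑ F : C.FaceR, C.pairWn F φ w

/-- `(μ φ, v)_{𝒯_h}`. -/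
def muPair (φ v : C.V) : ℂ := ∑ K : C.Elem, C.pairMu K φ v

/-- `(γ φ, v)_{ℱ_h^R}`. -/
def gamPair (φ v : C.V) : ℂ := ∑ F : C.FaceR, C.pairGam F φ v

/-- `(A 𝔊(φ), 𝔊(v))_{𝒯_h}`. -/
def agPair (φ v : C.V) : ℂ := ∑ K : C.Elem, C.pairAG K φ v

/-- The IPDG form `a_h(φ,v) := (A𝔊(φ), 𝔊(v))_{𝒯_h} + s_h(φ,v)`. -/
def ah (φ v : C.V) : ℂ := C.agPair φ v + C.sh φ v

/-- The discrete Helmholtz form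
`b_h(φ,v) := −ω²(μφ,v)_{𝒯_h} − iω(γφ,v)_{ℱ_h^R} + a_h(φ,v)`. -/
def bh (φ v : C.V) : ℂ :=
  -((C.ω ^ 2 : ℝ) : ℂ) * C.muPair φ v - Complex.I * (C.ω : ℂ) * C.gamPair φ v + C.ah φ v

/-- The positive Hermitian counterpart
`b_h^+(φ,v) := ω²(μφ,v)_{𝒯_h} + ω(γφ,v)_{ℱ_h^R} + (A𝔊(φ),𝔊(v))_{𝒯_h}`. -/
def bhp (φ v : C.V) : ℂ :=
  ((C.ω ^ 2 : ℝ) : ℂ) * C.muPair φ v + (C.ω : ℂ) * C.gamPair φ v + C.agPair φ v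

/-- `Repr v σ` expresses that `σ = A∇v ∈ X_{Γ_N}(div,Ω)`, through the identity
`(A𝔊(φ), 𝔊(v))_{𝒯_h} = (𝔊(φ), A∇v)_{𝒯_h}` for all broken `φ`. -/
def Repr (v : C.V) (σ : C.W) : Prop := ∀ φ : C.V, C.agPair φ v = ∑ K : C.Elem, C.pairG K φ σ

/-- `u` is the exact solution: `u ∈ H¹_{Γ_D}(Ω)` and `b(u,v) = (f,v)_Ω` for all
`v ∈ H¹_{Γ_D}(Ω)`. -/
def IsExactSol (u : C.V) : Prop := u ∈ C.H10 ∧ ∀ v ∈ C.H10, C.b u v = C.rhs v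

/-- `uh` solves the IPDG equations: `uh ∈ 𝒫_p(𝒯_h)` and `b_h(uh,v_h) = (f,v_h)_{𝒯_h}`
for all `v_h ∈ 𝒫_p(𝒯_h)`. -/
def IsDiscreteSol (uh : C.V) : Prop := uh ∈ C.Pp ∧ ∀ v ∈ C.Pp, C.bh uh v = C.rhs v

/-- `πg` is the `‖·‖_{†,1,𝒯_h}`-best approximation onto `H¹_{Γ_D}(Ω)`. -/
def IsPig (πg : C.V → C.V) : Prop :=
  ∀ v, πg v ∈ C.H10 ∧ ∀ s ∈ C.H10, C.dag1 (v - πg v) ≤ C.dag1 (v - s)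

/-- `π` is the `‖·‖_{†,1,𝒯_h}`-best approximation onto the Lagrange space
`𝒫_p(𝒯_h) ∩ H¹_{Γ_D}(Ω)`. -/
def IsPihg (π : C.V → C.V) : Prop :=
  ∀ v, π v ∈ C.Pp ⊓ C.H10 ∧ ∀ s ∈ C.Pp ⊓ C.H10, C.dag1 (v - π v) ≤ C.dag1 (v - s)

/-- `π` is the `‖·‖_{†,div,𝒯_h}`-best approximation onto the BDM space
`[𝒫_p(𝒯_h)]^d ∩ X_{Γ_N}(div,Ω)`. -/
def IsPihd (π : C.W → C.W) : Prop :=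
  ∀ w, π w ∈ C.Wh ∧ ∀ s ∈ C.Wh, C.dagDiv (w - π w) ≤ C.dagDiv (w - s)

/-- `dual ψ = u*_ψ` is the volume dual solution, `b(w, u*_ψ) = ω(μ w, ψ)_Ω` for all
conforming `w`, and `Adual ψ = A∇u*_ψ ∈ X_{Γ_N}(div,Ω)`. -/
def IsVolDual (dual : C.V → C.V) (Adual : C.V → C.W) : Prop :=
  ∀ ψ : C.V, dual ψ ∈ C.H10 ∧
    (∀ w ∈ C.H10, C.b w (dual ψ) = (C.ω : ℂ) * C.muPair w ψ) ∧
    C.Repr (dual ψ) (Adual ψ)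

/-- `dual Ψ = U*_Ψ` is the Robin-boundary dual solution,
`b(w, U*_Ψ) = ω^{1/2}(γ w, Ψ)_{Γ_R}`, and `Adual Ψ = A∇U*_Ψ`. -/
def IsRobDual (dual : C.V → C.V) (Adual : C.V → C.W) : Prop :=
  ∀ ψ : C.V, dual ψ ∈ C.H10 ∧
    (∀ w ∈ C.H10, C.b w (dual ψ) = ((Real.sqrt C.ω : ℝ) : ℂ) * C.gamPair w ψ) ∧
    C.Repr (dual ψ) (Adual ψ)

/-- `γg` and `γd` are upper bounds for the volume approximation factors
`γ̌_{ba,g}` and `γ̌_{ba,d}`. -/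
def VolFactors (dual : C.V → C.V) (Adual : C.V → C.W) (πhg : C.V → C.V) (πhd : C.W → C.W)
    (γg γd : ℝ) : Prop :=
  ∀ ψ : C.V, C.dag1 (dual ψ - πhg (dual ψ)) ≤ γg * C.normMuT ψ ∧
    C.dagDiv (Adual ψ - πhd (Adual ψ)) ≤ γd * C.normMuT ψ

/-- `γg` and `γd` are upper bounds for the Robin approximation factors
`γ̃_{ba,g}` and `γ̃_{ba,d}`. -/
def RobFactors (dual : C.V → C.V) (Adual : C.V → C.W) (πhg : C.V → C.V) (πhd : C.W → C.W)
    (γg γd : ℝ) : Prop :=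
  ∀ ψ : C.V, C.dag1 (dual ψ - πhg (dual ψ)) ≤ γg * C.normGamR ψ ∧
    C.dagDiv (Adual ψ - πhd (Adual ψ)) ≤ γd * C.normGamR ψ

/-- The conforming residual norm
`R_r := sup{ |b_h(u−u_h, v)| : v ∈ H¹_{Γ_D}(Ω), ‖∇v‖_{A,Ω} = 1 }`. -/
def Rr (u uh : C.V) : ℝ :=
  sSup {r : ℝ | ∃ v ∈ C.H10, C.normAgrad v = 1 ∧ r = ‖C.bh (u - uh) v‖}

/-- The non-conformity measure `R_c := ‖u_h − π^g u_h‖_{†,1,𝒯_h}`. -/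
def Rc (πg : C.V → C.V) (uh : C.V) : ℝ := C.dag1 (uh - πg uh)

/-- The total abstract estimator `R := (R_r² + R_c²)^{1/2}`. -/
def Rtot (πg : C.V → C.V) (u uh : C.V) : ℝ :=
  Real.sqrt (C.Rr u uh ^ 2 + C.Rc πg uh ^ 2)

/-- `ω h_F^⋆/ϑ_F^⋆ := max_{F ∈ ℱ_h^R} ω h_F/ϑ_F`. -/
def ratioFstar : ℝ := ⨆ F : C.FaceR, C.ω * C.hF F / C.thetaF F

/-- `ω h_K^⋆/ϑ_K^⋆ := max_{K ∈ 𝒯_h} ω h_K/ϑ_K`. -/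
def ratioKstar : ℝ := ⨆ K : C.Elem, C.ω * C.hK K / C.thetaK K

end DG

/-! The left-hand side equals the broken integration-by-parts pairing `(𝔊(φ), A∇ξ)_{𝒯_h} +
(φ, div A∇ξ)_{𝒯_h} − (φ, A∇ξ·n)_{ℱ_h^R}`. This pairing is sesquilinear and vanishes as soon as
its first argument is conforming or its second lies in the BDM space, so `φ` and `A∇ξ` may be
replaced by `φ − φ̃` and `A∇ξ − σ_h`. Element- and face-wise Cauchy–Schwarz, followed by a
weighted discrete Cauchy–Schwarz whose weights are exactly those of `‖·‖_{†,1,𝒯_h}`, gives the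
bound, since the reciprocal weights are dominated by those of `‖·‖_{†,div,𝒯_h}`. -/

theorem Real.sum_mul_le_sqrt_mul_sqrt_of_pos_weight {ι : Type*} (s : Finset ι)
    (a b c : ι → ℝ) (hc : ∀ i ∈ s, 0 < c i) :
    ∑ i ∈ s, a i * b i ≤
      √(∑ i ∈ s, c i * a i ^ 2) * √(∑ i ∈ s, b i ^ 2 / c i) := by
  have hcs := Real.sum_mul_le_sqrt_mul_sqrt s (fun i => √(c i) * a i) (fun i => b i / √(c i))
  have hprod : ∀ i ∈ s, √(c i) * a i * (b i / √(c i)) = a i * b i := fun i hi => by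
    have : √(c i) ≠ 0 := (Real.sqrt_pos.2 (hc i hi)).ne'
    field_simp
  have hleft : ∀ i ∈ s, (√(c i) * a i) ^ 2 = c i * a i ^ 2 := fun i hi => by
    rw [mul_pow, Real.sq_sqrt (hc i hi).le]
  have hright : ∀ i ∈ s, (b i / √(c i)) ^ 2 = b i ^ 2 / c i := fun i hi => by
    rw [div_pow, Real.sq_sqrt (hc i hi).le]
  rwa [Finset.sum_congr rfl hprod, Finset.sum_congr rfl hleft,
    Finset.sum_congr rfl hright] at hcs

namespace DG

variable (C : DG)

theorem pairB_sub_left (u v : C.V) (w : C.W) :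
    C.pairB (u - v) w = C.pairB u w - C.pairB v w := by
  simp only [pairB, C.pairG_sub_left, C.pairDiv_sub_left, C.pairWn_sub_left,
    Finset.sum_sub_distrib, Finset.sum_add_distrib]
  ring

theorem pairB_sub_right (u : C.V) (w w' : C.W) :
    C.pairB u (w - w') = C.pairB u w - C.pairB u w' := by
  simp only [pairB, C.pairG_sub_right, C.pairDiv_sub_right, C.pairWn_sub_right,
    Finset.sum_sub_distrib, Finset.sum_add_distrib]
  ring

theorem pairB_eq_zero_of_mem_H10 {u : C.V} (hu : u ∈ C.H10) (w : C.W) : C.pairB u w = 0 :=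
  sub_eq_zero.2 (C.ibp_conf u hu w)

theorem pairB_eq_zero_of_mem_Wh (u : C.V) {w : C.W} (hw : w ∈ C.Wh) : C.pairB u w = 0 :=
  sub_eq_zero.2 (C.ibp_disc u w hw)

theorem pairB_sub_sub_eq {φt : C.V} (hφt : φt ∈ C.H10) {σh : C.W} (hσh : σh ∈ C.Wh)
    (φ : C.V) (σ : C.W) : C.pairB (φ - φt) (σ - σh) = C.pairB φ σ := by
  rw [pairB_sub_left, pairB_sub_right, pairB_sub_right, C.pairB_eq_zero_of_mem_H10 hφt,
    C.pairB_eq_zero_of_mem_Wh φ hσh, C.pairB_eq_zero_of_mem_Wh φt hσh]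
  ring

theorem ah_add_sum_pairDiv_sub_sum_pairWn {ξ : C.V} (hξ : ξ ∈ C.H10) {σξ : C.W}
    (hσξ : C.Repr ξ σξ) (φ : C.V) :
    C.ah φ ξ + (∑ K : C.Elem, C.pairDiv K φ σξ) - ∑ F : C.FaceR, C.pairWn F φ σξ =
      C.pairB φ σξ := by
  rw [ah, hσξ φ, C.sh_conf φ ξ (Or.inr hξ), pairB, Finset.sum_add_distrib, add_zero]

/-- With `weightF`, this makes `dag1Sq v` definitionally
`∑_K (weightK K ‖v‖²_K + ‖𝔊(v)‖²_{A,K}) + ∑_F weightF F ‖v‖²_F`. -/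
def weightK (K : C.Elem) : ℝ :=
  max 1 (C.ω ^ 2 * C.hK K ^ 2 / C.thetaK K ^ 2) * (C.αK K / C.hK K ^ 2)

def weightF (F : C.FaceR) : ℝ :=
  max 1 (C.ω * C.hF F / C.thetaF F) * (C.αF F / C.hF F)

theorem weightK_pos (K : C.Elem) : 0 < C.weightK K :=
  mul_pos (one_pos.trans_le (le_max_left _ _)) (div_pos (C.αK_pos K) (pow_pos (C.hK_pos K) 2))

theorem weightF_pos (F : C.FaceR) : 0 < C.weightF F :=
  mul_pos (one_pos.trans_le (le_max_left _ _)) (div_pos (C.αF_pos F) (C.hF_pos F))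

theorem div_weightK_le (K : C.Elem) (x : ℝ) :
    x ^ 2 / C.weightK K ≤ C.hK K ^ 2 / C.αK K * x ^ 2 := by
  have hα : 0 < C.αK K / C.hK K ^ 2 := div_pos (C.αK_pos K) (pow_pos (C.hK_pos K) 2)
  calc x ^ 2 / _ ≤ x ^ 2 / (C.αK K / C.hK K ^ 2) :=
        div_le_div_of_nonneg_left (sq_nonneg x) hα (le_mul_of_one_le_left hα.le (le_max_left _ _))
    _ = C.hK K ^ 2 / C.αK K * x ^ 2 := by rw [div_div_eq_mul_div]; ring

theorem div_weightF_le (F : C.FaceR) (x : ℝ) :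
    x ^ 2 / C.weightF F ≤ C.hF F / C.αF F * x ^ 2 := by
  have hα : 0 < C.αF F / C.hF F := div_pos (C.αF_pos F) (C.hF_pos F)
  calc x ^ 2 / _ ≤ x ^ 2 / (C.αF F / C.hF F) :=
        div_le_div_of_nonneg_left (sq_nonneg x) hα (le_mul_of_one_le_left hα.le (le_max_left _ _))
    _ = C.hF F / C.αF F * x ^ 2 := by rw [div_div_eq_mul_div]; ring

theorem norm_pairB_le_sum (u : C.V) (w : C.W) :
    ‖C.pairB u w‖ ≤ ∑ K : C.Elem, (C.normL2 K u * C.normDiv K w + C.normAG K u * C.normAinv K w)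
      + ∑ F : C.FaceR, C.normF F u * C.normWn F w := by
  refine (norm_sub_le _ _).trans (add_le_add ?_ ((norm_sum_le _ _).trans ?_))
  · refine (norm_sum_le _ _).trans (Finset.sum_le_sum fun K _ => ?_)
    exact (norm_add_le _ _).trans (by linarith [C.csG K u w, C.csDiv K u w])
  · exact Finset.sum_le_sum fun F _ => C.csWn F u w

theorem sum_elem_elem_faceR {α : Type*} [AddCommMonoid α] (f : C.Elem ⊕ C.Elem ⊕ C.FaceR → α) :
    ∑ i, f i = ∑ K, (f (.inl K) + f (.inr (.inl K))) + ∑ F, f (.inr (.inr F)) := by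
  rw [Fintype.sum_sum_type, Fintype.sum_sum_type, Finset.sum_add_distrib, add_assoc]

theorem norm_pairB_le (u : C.V) (w : C.W) : ‖C.pairB u w‖ ≤ C.dag1 u * C.dagDiv w := by
  let a := Sum.elim (C.normL2 · u) (Sum.elim (C.normAG · u) (C.normF · u))
  let b := Sum.elim (C.normDiv · w) (Sum.elim (C.normAinv · w) (C.normWn · w))
  let c := Sum.elim C.weightK (Sum.elim (1 : C.Elem → ℝ) C.weightF)
  have hc : ∀ i ∈ Finset.univ, 0 < c i := by
    rintro (K | K | F) -
    exacts [C.weightK_pos K, one_pos, C.weightF_pos F]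
  have ha : ∑ i, c i * a i ^ 2 = C.dag1Sq u := by
    simp only [sum_elem_elem_faceR, a, c, Sum.elim_inl, Sum.elim_inr, Pi.one_apply, one_mul]
    rfl
  have hb : ∑ i, b i ^ 2 / c i ≤ C.dagDivSq w := by
    simp only [sum_elem_elem_faceR, b, c, Sum.elim_inl, Sum.elim_inr, Pi.one_apply, div_one]
    refine add_le_add (Finset.sum_le_sum fun K _ => ?_) (Finset.sum_le_sum fun F _ => ?_)
    · linarith [C.div_weightK_le K (C.normDiv K w)]
    · exact C.div_weightF_le F _
  calc ‖C.pairB u w‖ ≤ ∑ i, a i * b i := (C.norm_pairB_le_sum u w).trans_eq (by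
      simp only [sum_elem_elem_faceR, a, b, Sum.elim_inl, Sum.elim_inr])
    _ ≤ √(∑ i, c i * a i ^ 2) * √(∑ i, b i ^ 2 / c i) :=
      Real.sum_mul_le_sqrt_mul_sqrt_of_pos_weight _ a b c hc
    _ ≤ C.dag1 u * C.dagDiv w := by
      rw [ha]
      exact mul_le_mul_of_nonneg_left (Real.sqrt_le_sqrt hb) (Real.sqrt_nonneg _)

end DG

/-- Corollary 3.2, control of the non-conformity: for all
`φ ∈ H¹(𝒯_h)` and `ξ ∈ H¹_{Γ_D}(Ω)` with `A∇ξ ∈ X_{Γ_N}(div,Ω)` (represented by `σξ`),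
`|a_h(φ,ξ) + (φ, div(A∇ξ))_{𝒯_h} − (φ, A∇ξ·n)_{ℱ_h^R}|
  ≤ ‖φ−φ̃‖_{†,1,𝒯_h} ‖A∇ξ − σ_h‖_{†,div,𝒯_h}`
for all `φ̃ ∈ H¹_{Γ_D}(Ω)` and `σ_h ∈ [𝒫_p(𝒯_h)]^d ∩ X_{Γ_N}(div,Ω)`. -/
theorem nonconformity_control (C : DG) (φ ξ : C.V) (hξ : ξ ∈ C.H10)
    (σξ : C.W) (hσξ : C.Repr ξ σξ)
    (φt : C.V) (hφt : φt ∈ C.H10) (σh : C.W) (hσh : σh ∈ C.Wh) :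
    ‖C.ah φ ξ + (∑ K : C.Elem, C.pairDiv K φ σξ) - ∑ F : C.FaceR, C.pairWn F φ σξ‖ ≤
      C.dag1 (φ - φt) * C.dagDiv (σξ - σh) := by
  rw [C.ah_add_sum_pairDiv_sub_sum_pairWn hξ hσξ, ← C.pairB_sub_sub_eq hφt hσh]
  exact C.norm_pairB_le _ _
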